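/- arXiv:1204.1090 — 5 statements merged into one kernel-verified Lean document; each statement's English description precedes it below -/
import Mathlib

section
/- Let X be a real Banach space. The monotone map T(x, x*) = (-x*, J(x)) from X × X* to X* × X** is maximal monotone: if (p, q) ∈ (X × X*) × (X* × X**) satisfies ⟨p - z, q - T(z)⟩ ≥ 0 for all z ∈ X × X*, then q = T(p). -/
/-!
The map `T` is linear and skew, `⟨w, T w⟩ = -w.2 w.1 + w.2 w.1 = 0`. Hence for `z = p - w` the
monotonicity gap `⟨p - z, q - T z⟩` equals `⟨w, q - T p⟩`: a linear functional of `w` that is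
nonnegative everywhere, and therefore zero. So `q - T p = 0`.
-/

open NormedSpace

theorem map_eq_zero_of_forall_nonneg {M N F : Type*} [AddGroup M] [AddCommGroup N]
    [PartialOrder N] [IsOrderedAddMonoid N] [FunLike F M N] [AddMonoidHomClass F M N]
    (f : F) (hf : ∀ x, 0 ≤ f x) (x : M) : f x = 0 :=
  le_antisymm (by simpa using hf (-x)) (hf x)

theorem skew_gap_sub_eq {X : Type*} [NormedAddCommGroup X] [NormedSpace ℝ X]
    (p w : X × StrongDual ℝ X) (q : StrongDual ℝ X × StrongDual ℝ (StrongDual ℝ X)) :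
    (q.1 - -(p - w).2) (p.1 - (p - w).1) +
        (q.2 - inclusionInDoubleDual ℝ X (p - w).1) (p.2 - (p - w).2) =
      (q.1 + p.2) w.1 + (q.2 - inclusionInDoubleDual ℝ X p.1) w.2 := by
  simp only [Prod.fst_sub, Prod.snd_sub, sub_sub_cancel, map_sub, neg_sub,
    add_apply, sub_apply, dual_def]
  ring

theorem stmt2_general (X : Type*) [NormedAddCommGroup X] [NormedSpace ℝ X]
    (p : X × StrongDual ℝ X) (q : StrongDual ℝ X × StrongDual ℝ (StrongDual ℝ X))
    (h : ∀ z : X × StrongDual ℝ X,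
      0 ≤ (q.1 - -z.2) (p.1 - z.1) +
          (q.2 - inclusionInDoubleDual ℝ X z.1) (p.2 - z.2)) :
    q = (-p.2, inclusionInDoubleDual ℝ X p.1) := by
  have gap (w : X × StrongDual ℝ X) :
      0 ≤ (q.1 + p.2) w.1 + (q.2 - inclusionInDoubleDual ℝ X p.1) w.2 := by
    simpa only [skew_gap_sub_eq] using h (p - w)
  have h₁ : q.1 + p.2 = 0 :=
    ContinuousLinearMap.ext <| map_eq_zero_of_forall_nonneg _ fun u => by simpa using gap (u, 0)
  have h₂ : q.2 - inclusionInDoubleDual ℝ X p.1 = 0 :=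
    ContinuousLinearMap.ext <| map_eq_zero_of_forall_nonneg _ fun v => by simpa using gap (0, v)
  exact Prod.ext (eq_neg_of_add_eq_zero_left h₁) (sub_eq_zero.mp h₂)

/-- `T(x, x*) = (-x*, J x)` is maximal monotone: any `(p, q)` monotonically related to the
graph of `T` lies in the graph of `T`. -/
theorem stmt2 (X : Type*) [NormedAddCommGroup X] [NormedSpace ℝ X] [CompleteSpace X]
    (p : X × StrongDual ℝ X) (q : StrongDual ℝ X × StrongDual ℝ (StrongDual ℝ X))
    (h : ∀ z : X × StrongDual ℝ X,
      0 ≤ (q.1 - -z.2) (p.1 - z.1) +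
          (q.2 - inclusionInDoubleDual ℝ X z.1) (p.2 - z.2)) :
    q = (-p.2, inclusionInDoubleDual ℝ X p.1) :=
  stmt2_general X p q h
end

section
/- Let X be a real Banach space and T(x, x*) = (-x*, J(x)) : X × X* → X* × X**. Suppose a bounded net ((x_i, x_i*), T(x_i, x_i*)) in the graph of T converges in the weak-* × strong topology of (X** × X***) × (X* × X**) to ((p**, p***), (q*, q**)). Then there exist x ∈ X, x* ∈ X* with p** = J(x), p*** = J*(x*) (canonical injections), q* = -x*, and q** = J(x). In other words, the closure of the graph of T under bounded weak-*×strong limits equals the graph of T itself. -/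
/-!
Since `J : X → X**` is an isometry and `X` is complete, strong convergence of `J xᵢ` forces `xᵢ`
itself to converge strongly to some `x`; together with `x*ᵢ → -q*` in norm, the weak-* limits
`p**`, `p***` then coincide with the strong limits `J x`, `J (-q*)`.
-/

open NormedSpace Filter Topology

namespace NormedSpace

variable {𝕜 E ι : Type*} [RCLike 𝕜] [NormedAddCommGroup E] [NormedSpace 𝕜 E] {l : Filter ι}

theorem exists_tendsto_of_tendsto_inclusionInDoubleDual [CompleteSpace E] [l.NeBot]
    {u : ι → E} {φ : StrongDual 𝕜 (StrongDual 𝕜 E)}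
    (h : Tendsto (fun i => inclusionInDoubleDual 𝕜 E (u i)) l (𝓝 φ)) :
    ∃ x, φ = inclusionInDoubleDual 𝕜 E x ∧ Tendsto u l (𝓝 x) := by
  have hJ : IsClosedEmbedding (inclusionInDoubleDual 𝕜 E) :=
    Isometry.isClosedEmbedding (γ := StrongDual 𝕜 (StrongDual 𝕜 E))
      (inclusionInDoubleDualLi 𝕜).isometry
  obtain ⟨x, rfl⟩ : φ ∈ Set.range (inclusionInDoubleDual 𝕜 E) :=
    hJ.isClosed_range.mem_of_tendsto h (Eventually.of_forall fun i => ⟨u i, rfl⟩)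
  exact ⟨x, rfl, hJ.tendsto_nhds_iff.mpr h⟩

theorem eq_inclusionInDoubleDual_of_tendsto [l.NeBot] {u : ι → E} {x : E}
    {φ : StrongDual 𝕜 (StrongDual 𝕜 E)} (hu : Tendsto u l (𝓝 x))
    (hφ : ∀ f, Tendsto (fun i => inclusionInDoubleDual 𝕜 E (u i) f) l (𝓝 (φ f))) :
    φ = inclusionInDoubleDual 𝕜 E x := by
  ext f
  exact tendsto_nhds_unique (hφ f) ((f.continuous.tendsto x).comp hu)

end NormedSpace

theorem stmt4_general (X : Type*) [NormedAddCommGroup X] [NormedSpace ℝ X] [CompleteSpace X]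
    (I : Type*) [Nonempty I] [SemilatticeSup I] (a : I → X × StrongDual ℝ X)
    (p'' : StrongDual ℝ (StrongDual ℝ X)) (p''' : StrongDual ℝ (StrongDual ℝ (StrongDual ℝ X)))
    (q' : StrongDual ℝ X) (q'' : StrongDual ℝ (StrongDual ℝ X))
    -- first component converges in the weak-* topology of `X** × X***`
    (hw1 : ∀ f : StrongDual ℝ X,
      Tendsto (fun i => inclusionInDoubleDual ℝ X (a i).1 f) atTop (𝓝 (p'' f)))
    (hw2 : ∀ g : StrongDual ℝ (StrongDual ℝ X),
      Tendsto (fun i => inclusionInDoubleDual ℝ (StrongDual ℝ X) (a i).2 g) atTop (𝓝 (p''' g)))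
    -- second component converges strongly in `X* × X**`
    (hs : Tendsto (fun i => ((-(a i).2, inclusionInDoubleDual ℝ X (a i).1) :
        StrongDual ℝ X × StrongDual ℝ (StrongDual ℝ X))) atTop (𝓝 (q', q''))) :
    ∃ (x : X) (x' : StrongDual ℝ X),
      p'' = inclusionInDoubleDual ℝ X x ∧
      p''' = inclusionInDoubleDual ℝ (StrongDual ℝ X) x' ∧
      q' = -x' ∧ q'' = inclusionInDoubleDual ℝ X x := by
  obtain ⟨x, rfl, hx⟩ := exists_tendsto_of_tendsto_inclusionInDoubleDual hs.snd_nhds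
  have hx' : Tendsto (fun i => (a i).2) atTop (𝓝 (-q')) := by
    simpa using hs.fst_nhds.neg
  exact ⟨x, -q', eq_inclusionInDoubleDual_of_tendsto hx hw1,
    eq_inclusionInDoubleDual_of_tendsto hx' hw2, (neg_neg q').symm, rfl⟩

/-- Bounded nets in the graph of `T(x,x*) = (-x*, Jx)` converging weak-*×strong have their
limit in the (canonically embedded) graph of `T`: the bounded weak-*×strong closure of the
graph of `T` equals the graph of `T` itself. -/
theorem stmt4 (X : Type*) [NormedAddCommGroup X] [NormedSpace ℝ X] [CompleteSpace X]
    (I : Type*) [Nonempty I] [SemilatticeSup I] (a : I → X × StrongDual ℝ X)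
    (hbdd : ∃ C : ℝ, ∀ i, ‖a i‖ ≤ C)
    (p'' : StrongDual ℝ (StrongDual ℝ X)) (p''' : StrongDual ℝ (StrongDual ℝ (StrongDual ℝ X)))
    (q' : StrongDual ℝ X) (q'' : StrongDual ℝ (StrongDual ℝ X))
    -- first component converges in the weak-* topology of `X** × X***`
    (hw1 : ∀ f : StrongDual ℝ X,
      Tendsto (fun i => inclusionInDoubleDual ℝ X (a i).1 f) atTop (𝓝 (p'' f)))
    (hw2 : ∀ g : StrongDual ℝ (StrongDual ℝ X),
      Tendsto (fun i => inclusionInDoubleDual ℝ (StrongDual ℝ X) (a i).2 g) atTop (𝓝 (p''' g)))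
    -- second component converges strongly in `X* × X**`
    (hs : Tendsto (fun i => ((-(a i).2, inclusionInDoubleDual ℝ X (a i).1) :
        StrongDual ℝ X × StrongDual ℝ (StrongDual ℝ X))) atTop (𝓝 (q', q''))) :
    ∃ (x : X) (x' : StrongDual ℝ X),
      p'' = inclusionInDoubleDual ℝ X x ∧
      p''' = inclusionInDoubleDual ℝ (StrongDual ℝ X) x' ∧
      q' = -x' ∧ q'' = inclusionInDoubleDual ℝ X x :=
  stmt4_general X I a p'' p''' q' q'' hw1 hw2 hs
end

section
/- Let X be a non-reflexive real Banach space, and let x₀** ∈ X**, w₀ ∈ X*** satisfy ⟨x₀**, w₀⟩ = 1 and ⟨J(x), w₀⟩ = 0 for all x ∈ X. For t > 0 define p_t = (t·x₀**, (1/t)·w₀) ∈ X** × X*** and q_t = (0, t·x₀**) ∈ X* × X**. Then for every (x, x*) ∈ X × X*, the pairing ⟨(J(x), J*(x*)) - p_t, (-x*, J(x)) - q_t⟩ equals 1; in particular it is nonnegative, so the extension of the graph of T(x,x*) = (-x*, J(x)) (canonically embedded in (X** × X***) × (X* × X**)) by the single point (p_t, q_t) is monotone. -/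
namespace NormedSpace

/-- The topological dual of a seminormed space `E` (as in the older Mathlib). -/
abbrev Dual (𝕜 : Type*) [NontriviallyNormedField 𝕜] (E : Type*) [SeminormedAddCommGroup E]
    [NormedSpace 𝕜 E] : Type _ := E →L[𝕜] 𝕜

end NormedSpace

open NormedSpace

/-!
The graph of `T`, embedded by `(x, x*) ↦ ((Jx, J*x*), (-x*, Jx))`, is a linear subspace on which
the pairing vanishes, since `⟨Jx, -x*⟩ + ⟨Jx, J*x*⟩ = -x*(x) + x*(x) = 0`; so it is monotone.
Against `(p_t, q_t)` the terms `± t ⟨x₀**, x*⟩` cancel, `w₀` kills `Jx`, and only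
`(1/t) ⟨t x₀**, w₀⟩ = 1` survives. As the pairing of `z` and of `-z` agree, this also covers the
pairs taken in the other order.
-/

noncomputable section Pairing

variable {F G : Type*} [SeminormedAddCommGroup F] [NormedSpace ℝ F]
  [SeminormedAddCommGroup G] [NormedSpace ℝ G]

def dualPairing (z : (Dual ℝ F × Dual ℝ G) × (F × G)) : ℝ := z.1.1 z.2.1 + z.1.2 z.2.2

@[simp]
lemma dualPairing_neg (z : (Dual ℝ F × Dual ℝ G) × (F × G)) :
    dualPairing (-z) = dualPairing z := by
  simp [dualPairing]

end Pairing

noncomputable section Graph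

variable {X : Type*} [SeminormedAddCommGroup X] [NormedSpace ℝ X]

def graphPoint (x : X) (x' : Dual ℝ X) :
    (Dual ℝ (Dual ℝ X) × Dual ℝ (Dual ℝ (Dual ℝ X))) × (Dual ℝ X × Dual ℝ (Dual ℝ X)) :=
  ((inclusionInDoubleDual ℝ X x, inclusionInDoubleDual ℝ (Dual ℝ X) x'),
    (-x', inclusionInDoubleDual ℝ X x))

lemma graphPoint_sub (x y : X) (x' y' : Dual ℝ X) :
    graphPoint x x' - graphPoint y y' = graphPoint (x - y) (x' - y') := by
  simp only [graphPoint, Prod.mk_sub_mk, map_sub, neg_sub_neg, neg_sub]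

@[simp]
lemma dualPairing_graphPoint (x : X) (x' : Dual ℝ X) : dualPairing (graphPoint x x') = 0 := by
  simp [dualPairing, graphPoint, dual_def]

lemma dualPairing_graphPoint_sub_graphPoint (x y : X) (x' y' : Dual ℝ X) :
    dualPairing (graphPoint x x' - graphPoint y y') = 0 := by
  rw [graphPoint_sub, dualPairing_graphPoint]

lemma dualPairing_graphPoint_sub_eq_one {x₀ : Dual ℝ (Dual ℝ X)}
    {w₀ : Dual ℝ (Dual ℝ (Dual ℝ X))} (h1 : w₀ x₀ = 1)
    (h0 : ∀ x : X, w₀ (inclusionInDoubleDual ℝ X x) = 0) {t : ℝ} (ht : t ≠ 0)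
    (x : X) (x' : Dual ℝ X) :
    dualPairing (graphPoint x x' - ((t • x₀, (1 / t) • w₀), (0, t • x₀))) = 1 := by
  simp only [dualPairing, graphPoint, Prod.fst_sub, Prod.snd_sub, sub_zero, map_sub, map_neg,
    map_smul, sub_apply,
    smul_apply, dual_def, h0, h1, smul_eq_mul]
  field_simp
  ring

end Graph

theorem stmt7_general (X : Type*) [NormedAddCommGroup X] [NormedSpace ℝ X]
    (x₀ : Dual ℝ (Dual ℝ X)) (w₀ : Dual ℝ (Dual ℝ (Dual ℝ X)))
    (h1 : w₀ x₀ = 1) (h0 : ∀ x : X, w₀ (inclusionInDoubleDual ℝ X x) = 0)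
    (t : ℝ) (ht : 0 < t) :
    (∀ (x : X) (x' : Dual ℝ X),
      (inclusionInDoubleDual ℝ X x - t • x₀) (-x' - 0) +
      (inclusionInDoubleDual ℝ (Dual ℝ X) x' - (1/t) • w₀)
        (inclusionInDoubleDual ℝ X x - t • x₀) = 1) ∧
    -- the extended graph is monotone
    (∀ p q : (Dual ℝ (Dual ℝ X) × Dual ℝ (Dual ℝ (Dual ℝ X))) ×
        (Dual ℝ X × Dual ℝ (Dual ℝ X)),
      p ∈ {z | (∃ (x : X) (x' : Dual ℝ X),
              z = ((inclusionInDoubleDual ℝ X x, inclusionInDoubleDual ℝ (Dual ℝ X) x'),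
                   (-x', inclusionInDoubleDual ℝ X x))) ∨
            z = ((t • x₀, (1/t) • w₀), (0, t • x₀))} →
      q ∈ {z | (∃ (x : X) (x' : Dual ℝ X),
              z = ((inclusionInDoubleDual ℝ X x, inclusionInDoubleDual ℝ (Dual ℝ X) x'),
                   (-x', inclusionInDoubleDual ℝ X x))) ∨
            z = ((t • x₀, (1/t) • w₀), (0, t • x₀))} →
      0 ≤ (p.1.1 - q.1.1) (p.2.1 - q.2.1) + (p.1.2 - q.1.2) (p.2.2 - q.2.2)) := by
  have key := dualPairing_graphPoint_sub_eq_one h1 h0 ht.ne'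
  refine ⟨key, ?_⟩
  rintro p q (⟨x, x', rfl⟩ | rfl) (⟨y, y', rfl⟩ | rfl)
  · exact (dualPairing_graphPoint_sub_graphPoint x y x' y').ge
  · exact zero_le_one.trans_eq (key x x').symm
  · change 0 ≤ dualPairing (_ - graphPoint y y')
    rw [← neg_sub, dualPairing_neg, key]
    exact zero_le_one
  · simp

/-- With `⟨x₀**, w₀⟩ = 1`, `w₀` vanishing on `J(X)`, `p_t = (t x₀**, (1/t) w₀)`,
`q_t = (0, t x₀**)`: the pairing `⟨(Jx, J*x*) - p_t, (-x*, Jx) - q_t⟩` equals `1` for all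
`(x, x*)`, hence the graph of `T` extended by `(p_t, q_t)` is monotone. -/
theorem stmt7 (X : Type*) [NormedAddCommGroup X] [NormedSpace ℝ X] [CompleteSpace X]
    (x₀ : Dual ℝ (Dual ℝ X)) (w₀ : Dual ℝ (Dual ℝ (Dual ℝ X)))
    (h1 : w₀ x₀ = 1) (h0 : ∀ x : X, w₀ (inclusionInDoubleDual ℝ X x) = 0)
    (t : ℝ) (ht : 0 < t) :
    (∀ (x : X) (x' : Dual ℝ X),
      (inclusionInDoubleDual ℝ X x - t • x₀) (-x' - 0) +
      (inclusionInDoubleDual ℝ (Dual ℝ X) x' - (1/t) • w₀)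
        (inclusionInDoubleDual ℝ X x - t • x₀) = 1) ∧
    -- the extended graph is monotone
    (∀ p q : (Dual ℝ (Dual ℝ X) × Dual ℝ (Dual ℝ (Dual ℝ X))) ×
        (Dual ℝ X × Dual ℝ (Dual ℝ X)),
      p ∈ {z | (∃ (x : X) (x' : Dual ℝ X),
              z = ((inclusionInDoubleDual ℝ X x, inclusionInDoubleDual ℝ (Dual ℝ X) x'),
                   (-x', inclusionInDoubleDual ℝ X x))) ∨
            z = ((t • x₀, (1/t) • w₀), (0, t • x₀))} →
      q ∈ {z | (∃ (x : X) (x' : Dual ℝ X),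
              z = ((inclusionInDoubleDual ℝ X x, inclusionInDoubleDual ℝ (Dual ℝ X) x'),
                   (-x', inclusionInDoubleDual ℝ X x))) ∨
            z = ((t • x₀, (1/t) • w₀), (0, t • x₀))} →
      0 ≤ (p.1.1 - q.1.1) (p.2.1 - q.2.1) + (p.1.2 - q.1.2) (p.2.2 - q.2.2)) :=
  stmt7_general X x₀ w₀ h1 h0 t ht
end

section
/- Let X be a non-reflexive real Banach space. The maximal monotone operator T : X × X* → X* × X**, T(x, x*) = (-x*, J(x)), is not of type (D): there exists a point (p, q) ∈ (X** × X***) × (X* × X**) satisfying ⟨q - T(z), p - z⟩ ≥ 0 for all z ∈ X × X* (where X × X* is canonically embedded in X** × X***), but which is not in the graph of the bounded weak-*×strong closure of T (which equals the graph of T itself). -/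
open NormedSpace

/-!
Pick `v ∈ X** \ J(X)` and take `p = (v, 0)`, `q = (0, v)`. Against a graph point
`((x, x*), (-x*, Jx))` the monotonicity gap is `(v - Jx)(x*) - (Jx*)(v - Jx) = 0`, while
`p.1 = v` is not of the form `Jx`.
-/

theorem apply_zero_sub_neg_add_zero_sub_inclusionInDoubleDual_apply_eq_zero {𝕜 : Type*}
    [NontriviallyNormedField 𝕜] {E : Type*} [SeminormedAddCommGroup E] [NormedSpace 𝕜 E]
    (w : Dual 𝕜 (Dual 𝕜 E)) (f : Dual 𝕜 E) :
    w (0 - -f) + (0 - inclusionInDoubleDual 𝕜 (Dual 𝕜 E) f) w = 0 := by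
  simp only [sub_neg_eq_add, zero_add, sub_apply, zero_apply, dual_def, zero_sub, add_neg_cancel]

theorem stmt9_general (X : Type*) [NormedAddCommGroup X] [NormedSpace ℝ X]
    (hnr : ¬ Function.Surjective (inclusionInDoubleDual ℝ X)) :
    ∃ (p : Dual ℝ (Dual ℝ X) × Dual ℝ (Dual ℝ (Dual ℝ X)))
      (q : Dual ℝ X × Dual ℝ (Dual ℝ X)),
      (∀ (x : X) (x' : Dual ℝ X),
        0 ≤ (p.1 - inclusionInDoubleDual ℝ X x) (q.1 - -x') +
            (p.2 - inclusionInDoubleDual ℝ (Dual ℝ X) x')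
              (q.2 - inclusionInDoubleDual ℝ X x)) ∧
      ¬ ∃ (x : X) (x' : Dual ℝ X),
        p = (inclusionInDoubleDual ℝ X x, inclusionInDoubleDual ℝ (Dual ℝ X) x') ∧
        q = (-x', inclusionInDoubleDual ℝ X x) := by
  obtain ⟨v, hv⟩ := not_forall.mp hnr
  refine ⟨(v, 0), (0, v), fun x x' => ?_, ?_⟩
  · exact (apply_zero_sub_neg_add_zero_sub_inclusionInDoubleDual_apply_eq_zero
      (v - inclusionInDoubleDual ℝ X x) x').ge
  · rintro ⟨x, _, hp, -⟩
    exact hv ⟨x, (congrArg Prod.fst hp).symm⟩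

/-- If `X` is non-reflexive then `T(x,x*) = (-x*, Jx)` is not of type (D): there is a point
monotonically related to the (embedded) graph of `T` which does not belong to the graph of the
bounded weak-*×strong closure of `T` (which equals the graph of `T` itself). -/
theorem stmt9 (X : Type*) [NormedAddCommGroup X] [NormedSpace ℝ X] [CompleteSpace X]
    (hnr : ¬ Function.Surjective (inclusionInDoubleDual ℝ X)) :
    ∃ (p : Dual ℝ (Dual ℝ X) × Dual ℝ (Dual ℝ (Dual ℝ X)))
      (q : Dual ℝ X × Dual ℝ (Dual ℝ X)),
      (∀ (x : X) (x' : Dual ℝ X),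
        0 ≤ (p.1 - inclusionInDoubleDual ℝ X x) (q.1 - -x') +
            (p.2 - inclusionInDoubleDual ℝ (Dual ℝ X) x')
              (q.2 - inclusionInDoubleDual ℝ X x)) ∧
      ¬ ∃ (x : X) (x' : Dual ℝ X),
        p = (inclusionInDoubleDual ℝ X x, inclusionInDoubleDual ℝ (Dual ℝ X) x') ∧
        q = (-x', inclusionInDoubleDual ℝ X x) :=
  stmt9_general X hnr
end

section
/- Let X be a non-reflexive real Banach space, x₀** ∈ X**, w₀ ∈ X*** with ⟨x₀**, w₀⟩ = 1 and ⟨J(x), w₀⟩ = 0 for all x ∈ X. Then for each t > 0 the point (p_t, q_t) with p_t = (t·x₀**, (1/t)·w₀), q_t = (0, t·x₀**) is monotonically related to the embedded graph of T(x,x*) = (-x*, J(x)), yet (p_t, q_t) does not lie in the embedded graph of T (since t·x₀** ∉ J(X)). -/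
open NormedSpace

section DoubleDual

variable {X : Type*} [NormedAddCommGroup X] [NormedSpace ℝ X]

-- The operator `(x, x') ↦ (-x', Jx)` is skew, so its part of the pairing cancels.
theorem apply_zero_sub_neg_add_sub_inclusionInDoubleDual_apply (u : Dual ℝ (Dual ℝ X))
    (w : Dual ℝ (Dual ℝ (Dual ℝ X))) (x' : Dual ℝ X) :
    u ((0 : Dual ℝ X) - -x') + (w - inclusionInDoubleDual ℝ (Dual ℝ X) x') u = w u := by
  simp [dual_def]

theorem smul_ne_inclusionInDoubleDual {x₀ : Dual ℝ (Dual ℝ X)} {w : Dual ℝ (Dual ℝ (Dual ℝ X))}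
    (hx₀ : w x₀ ≠ 0) (h0 : ∀ x : X, w (inclusionInDoubleDual ℝ X x) = 0) {t : ℝ} (ht : t ≠ 0)
    (x : X) : t • x₀ ≠ inclusionInDoubleDual ℝ X x := by
  intro hx
  have hw := congrArg w hx
  rw [map_smul, h0, smul_eq_mul] at hw
  exact mul_ne_zero ht hx₀ hw

end DoubleDual

theorem stmt17_general (X : Type*) [NormedAddCommGroup X] [NormedSpace ℝ X]
    (x₀ : Dual ℝ (Dual ℝ X)) (w₀ : Dual ℝ (Dual ℝ (Dual ℝ X)))
    (h1 : w₀ x₀ = 1) (h0 : ∀ x : X, w₀ (inclusionInDoubleDual ℝ X x) = 0)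
    (t : ℝ) (ht : 0 < t) :
    (∀ (x : X) (x' : Dual ℝ X),
      0 ≤ (t • x₀ - inclusionInDoubleDual ℝ X x) ((0 : Dual ℝ X) - -x') +
          ((1/t) • w₀ - inclusionInDoubleDual ℝ (Dual ℝ X) x')
            (t • x₀ - inclusionInDoubleDual ℝ X x)) ∧
    ¬ ∃ (x : X) (x' : Dual ℝ X),
      ((t • x₀, (1/t) • w₀) : Dual ℝ (Dual ℝ X) × Dual ℝ (Dual ℝ (Dual ℝ X))) =
        (inclusionInDoubleDual ℝ X x, inclusionInDoubleDual ℝ (Dual ℝ X) x') ∧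
      (((0 : Dual ℝ X), t • x₀) : Dual ℝ X × Dual ℝ (Dual ℝ X)) =
        (-x', inclusionInDoubleDual ℝ X x) := by
  refine ⟨fun x x' => ?_, fun ⟨x, _, hp, _⟩ => ?_⟩
  · have hpairing : ((1 / t) • w₀) (t • x₀ - inclusionInDoubleDual ℝ X x) = 1 := by
      simp [h1, h0, ht.ne']
    rw [apply_zero_sub_neg_add_sub_inclusionInDoubleDual_apply, hpairing]
    exact zero_le_one
  · exact smul_ne_inclusionInDoubleDual (h1 ▸ one_ne_zero) h0 ht.ne' x (congrArg Prod.fst hp)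

/-- For each `t > 0`, the point `(p_t, q_t)` is monotonically related to the embedded graph
of `T(x,x*) = (-x*, Jx)`, yet it does not lie in that graph. -/
theorem stmt17 (X : Type*) [NormedAddCommGroup X] [NormedSpace ℝ X] [CompleteSpace X]
    (x₀ : Dual ℝ (Dual ℝ X)) (w₀ : Dual ℝ (Dual ℝ (Dual ℝ X)))
    (h1 : w₀ x₀ = 1) (h0 : ∀ x : X, w₀ (inclusionInDoubleDual ℝ X x) = 0)
    (t : ℝ) (ht : 0 < t) :
    (∀ (x : X) (x' : Dual ℝ X),
      0 ≤ (t • x₀ - inclusionInDoubleDual ℝ X x) ((0 : Dual ℝ X) - -x') +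
          ((1/t) • w₀ - inclusionInDoubleDual ℝ (Dual ℝ X) x')
            (t • x₀ - inclusionInDoubleDual ℝ X x)) ∧
    ¬ ∃ (x : X) (x' : Dual ℝ X),
      ((t • x₀, (1/t) • w₀) : Dual ℝ (Dual ℝ X) × Dual ℝ (Dual ℝ (Dual ℝ X))) =
        (inclusionInDoubleDual ℝ X x, inclusionInDoubleDual ℝ (Dual ℝ X) x') ∧
      (((0 : Dual ℝ X), t • x₀) : Dual ℝ X × Dual ℝ (Dual ℝ X)) =
        (-x', inclusionInDoubleDual ℝ X x) :=
  stmt17_general X x₀ w₀ h1 h0 t ht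
end
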